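/- arXiv:1901.02991 — 2 statements merged into one kernel-verified Lean document; each statement's English description precedes it below -/
import Mathlib

section
/- Under assumptions (A1), (A2), (A4), (A6) and (R), suppose P(S=0, D=1) > 0 and P(S=1, T=0, C=1) > 0, and suppose the law of W under P(·|{S=0, D=1}) is absolutely continuous with respect to its law under P(·|{S=1, T=0, C=1}). Let g₀ : 𝒲 → ℝ be a version of E[Y₍10₎ | {S=1, T=0, C=1}, W]. Then E[Y₍00₎ | S=0, D=1] = E[g₀(W) | S=0, D=1]; that is, the mean control potential outcome of treated population members is identified from the RCT controls who would have complied had they been assigned to treatment. -/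
/-! Among the treated compliers `{T=1, C=1}`, (A4) makes the conditional expectation of `Y₁₀`
given `W` unchanged by further conditioning on `S`, so one function `h` of `W` represents it
both in the RCT and in the population. In the population this gives `E[Y₁₀ | S=0, D=1] =
E[h(W) | S=0, D=1]` by (A6), and the left side is the target by (A1). In the RCT, randomization
(R) gives `(W, Y₁₀)` the same law among treated and control compliers, so `g₀` is also a version
of `E[Y₁₀ | W]` for the treated compliers; hence `h = g₀` almost everywhere for the covariate law
of the compliers, and absolute continuity carries this to the covariate law of `{S=0, D=1}`. -/

open MeasureTheory ProbabilityTheory Filter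

namespace ProbabilityTheory

section Cond

variable {Ω : Type*} {mΩ : MeasurableSpace Ω} {μ : Measure Ω}

theorem cond_congr_ae {s t : Set Ω} (h : s =ᵐ[μ] t) : μ[|s] = μ[|t] := by
  rw [cond, cond, measure_congr h, Measure.restrict_congr_set h]

theorem _root_.MeasureTheory.Integrable.cond {E : Type*} [NormedAddCommGroup E] {f : Ω → E}
    (hf : Integrable f μ) (s : Set Ω) : Integrable f μ[|s] := by
  rcases eq_or_ne (μ s) 0 with hs | hs
  · simp [cond_eq_zero_of_meas_eq_zero hs]
  · exact hf.restrict.smul_measure (ENNReal.inv_ne_top.mpr hs)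

theorem setIntegral_cond {s t : Set Ω} (ht : MeasurableSet t) (f : Ω → ℝ) :
    ∫ ω in t, f ω ∂μ[|s] = (μ s)⁻¹.toReal * ∫ ω in t ∩ s, f ω ∂μ := by
  rw [cond, Measure.restrict_smul, integral_smul_measure, smul_eq_mul,
    Measure.restrict_restrict ht]

theorem condExp_cond_ae_eq_condExp [IsFiniteMeasure μ] {m₁ m₂ : MeasurableSpace Ω}
    (hm₁₂ : m₁ ≤ m₂) (hm₂ : m₂ ≤ mΩ) {Y : Ω → ℝ} (hY : Integrable Y μ)
    (hY₁₂ : μ[Y | m₁] =ᵐ[μ] μ[Y | m₂]) {t : Set Ω} (ht : MeasurableSet[m₂] t) :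
    (μ[|t])[Y | m₁] =ᵐ[μ[|t]] μ[Y | m₁] := by
  have hm₁ := hm₁₂.trans hm₂
  refine (ae_eq_condExp_of_forall_setIntegral_eq hm₁ (hY.cond t)
    (fun _ _ _ => (integrable_condExp.cond t).integrableOn) (fun s hs _ => ?_)
    stronglyMeasurable_condExp.aestronglyMeasurable).symm
  rw [setIntegral_cond (hm₁ s hs), setIntegral_cond (hm₁ s hs),
    setIntegral_congr_ae (hm₂ _ ((hm₁₂ s hs).inter ht)) (hY₁₂.mono fun _ h _ => h),
    setIntegral_condExp hm₂ hY ((hm₁₂ s hs).inter ht)]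

theorem measure_ne_zero_of_ae_pos_condExp_indicator [NeZero μ] {m : MeasurableSpace Ω}
    {s : Set Ω} (hpos : ∀ᵐ ω ∂μ, 0 < μ[s.indicator (fun _ => (1 : ℝ)) | m] ω) : μ s ≠ 0 := by
  intro hs0
  have hzero : μ[s.indicator (fun _ => (1 : ℝ)) | m] =ᵐ[μ] 0 := by
    simpa using condExp_congr_ae (m := m) (@indicator_meas_zero _ ℝ mΩ μ s (fun _ => 1) _ hs0)
  obtain ⟨ω, hω⟩ := (hpos.and hzero).exists
  exact hω.1.ne' hω.2

end Cond

section CondIndep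

variable {Ω 𝒲 β : Type*} {mΩ : MeasurableSpace Ω} [StandardBorelSpace Ω]
  [m𝒲 : MeasurableSpace 𝒲] [MeasurableSpace β] [StandardBorelSpace β] [Nonempty β]
  {μ : Measure Ω} [IsFiniteMeasure μ] {Y : Ω → ℝ} {W : Ω → 𝒲} {S : Ω → β}

theorem CondIndepFun.condExp_prodMk_ae_eq_condExp (hYm : Measurable Y) (hY : Integrable Y μ)
    (hW : Measurable W) (hS : Measurable S) (hind : Y ⟂ᵢ[W, hW; μ] S) :
    μ[Y | (m𝒲.prod inferInstance).comap (fun ω => (W ω, S ω))] =ᵐ[μ] μ[Y | m𝒲.comap W] := by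
  have hker := (condIndepFun_iff_condDistrib_prod_ae_eq_prodMkRight hYm hS hW).mp hind.symm
  refine (condExp_ae_eq_integral_condDistrib' (hW.prodMk hS) hY).trans ?_
  refine EventuallyEq.trans ?_ (condExp_ae_eq_integral_condDistrib' hW hY).symm
  filter_upwards [ae_of_ae_map (hW.prodMk hS).aemeasurable hker] with ω hω
  rw [hω, Kernel.prodMkRight_apply]

theorem CondIndepFun.condExp_cond_preimage_ae_eq (hYm : Measurable Y) (hY : Integrable Y μ)
    (hW : Measurable W) (hS : Measurable S) (hind : Y ⟂ᵢ[W, hW; μ] S) {u : Set β}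
    (hu : MeasurableSet u) :
    (μ[|S ⁻¹' u])[Y | m𝒲.comap W] =ᵐ[μ[|S ⁻¹' u]] μ[Y | m𝒲.comap W] := by
  have hW_le : Measurable[MeasurableSpace.comap (fun ω => (W ω, S ω)) inferInstance] W :=
    measurable_fst.comp (comap_measurable _)
  exact condExp_cond_ae_eq_condExp hW_le.comap_le (hW.prodMk hS).comap_le hY
    (hind.condExp_prodMk_ae_eq_condExp hYm hY hW hS).symm
    ⟨Set.univ ×ˢ u, MeasurableSet.univ.prod hu, by ext; simp⟩

end CondIndep

section Randomization

variable {Ω β τ : Type*} {mΩ : MeasurableSpace Ω} [MeasurableSpace β] [MeasurableSpace τ]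
  {μ : Measure Ω} [IsFiniteMeasure μ] {T : Ω → τ} {V : Ω → β}

theorem IndepFun.map_cond_inter_preimage_eq (hTV : IndepFun T V μ) (hT : Measurable T)
    (hV : Measurable V) {u : Set τ} {A : Set β} (hu : MeasurableSet u) (hA : MeasurableSet A)
    (hpos : μ (T ⁻¹' u ∩ V ⁻¹' A) ≠ 0) :
    (μ[|T ⁻¹' u ∩ V ⁻¹' A]).map V = (μ[|V ⁻¹' A]).map V := by
  have hTu : μ (T ⁻¹' u) ≠ 0 := fun h => hpos (measure_mono_null Set.inter_subset_left h)
  ext B hB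
  rw [Measure.map_apply hV hB, Measure.map_apply hV hB, cond_apply ((hT hu).inter (hV hA)),
    cond_apply (hV hA), Set.inter_assoc, ← Set.preimage_inter,
    hTV.measure_inter_preimage_eq_mul _ _ hu hA,
    hTV.measure_inter_preimage_eq_mul _ _ hu (hA.inter hB),
    ENNReal.mul_inv (Or.inl hTu) (Or.inl (measure_ne_top _ _)), mul_mul_mul_comm,
    ENNReal.inv_mul_cancel hTu (measure_ne_top _ _), one_mul]

theorem IndepFun.identDistrib_cond_inter_preimage {s : Set Ω} (hs : MeasurableSet s)
    (hTV : IndepFun T V μ[|s]) (hT : Measurable T) (hV : Measurable V) {u u' : Set τ}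
    {A : Set β} (hu : MeasurableSet u) (hu' : MeasurableSet u') (hA : MeasurableSet A)
    (hpos : μ (s ∩ (T ⁻¹' u ∩ V ⁻¹' A)) ≠ 0) (hpos' : μ (s ∩ (T ⁻¹' u' ∩ V ⁻¹' A)) ≠ 0) :
    IdentDistrib V V μ[|s ∩ (T ⁻¹' u ∩ V ⁻¹' A)] μ[|s ∩ (T ⁻¹' u' ∩ V ⁻¹' A)] where
  aemeasurable_fst := hV.aemeasurable
  aemeasurable_snd := hV.aemeasurable
  map_eq := by
    rw [← cond_cond_eq_cond_inter hs ((hT hu).inter (hV hA)),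
      ← cond_cond_eq_cond_inter hs ((hT hu').inter (hV hA)),
      hTV.map_cond_inter_preimage_eq hT hV hu hA (cond_pos_of_inter_ne_zero hs hpos).ne',
      hTV.map_cond_inter_preimage_eq hT hV hu' hA (cond_pos_of_inter_ne_zero hs hpos').ne']

end Randomization

section Transport

variable {Ω 𝒲 : Type*} {mΩ : MeasurableSpace Ω} [m𝒲 : MeasurableSpace 𝒲]

theorem IdentDistrib.condExp_ae_eq_comp {Ω' : Type*} {mΩ' : MeasurableSpace Ω'}
    {μ : Measure Ω} {ν : Measure Ω'} [IsFiniteMeasure μ] [IsFiniteMeasure ν] {W : Ω → 𝒲} {Y : Ω → ℝ} {W' : Ω' → 𝒲} {Y' : Ω' → ℝ}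
    (hid : IdentDistrib (fun ω => (W ω, Y ω)) (fun ω => (W' ω, Y' ω)) μ ν)
    (hW : Measurable W) (hW' : Measurable W') (hY : Integrable Y μ)
    {g : 𝒲 → ℝ} (hg : Measurable g) (hYg : μ[Y | m𝒲.comap W] =ᵐ[μ] g ∘ W) :
    ν[Y' | m𝒲.comap W'] =ᵐ[ν] g ∘ W' := by
  have hY' : Integrable Y' ν := (hid.comp measurable_snd).integrable_iff.mp hY
  have hgW' : Integrable (g ∘ W') ν :=
    ((hid.comp measurable_fst).comp hg).integrable_iff.mp (integrable_condExp.congr hYg)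
  have hsetIntegral {B : Set 𝒲} (hB : MeasurableSet B) {F : 𝒲 × ℝ → ℝ} (hF : Measurable F) :
      ∫ ω in W ⁻¹' B, F (W ω, Y ω) ∂μ = ∫ ω in W' ⁻¹' B, F (W' ω, Y' ω) ∂ν := by
    rw [show W ⁻¹' B = (fun ω => (W ω, Y ω)) ⁻¹' (B ×ˢ Set.univ) by simp [Set.mk_preimage_prod],
      show W' ⁻¹' B = (fun ω => (W' ω, Y' ω)) ⁻¹' (B ×ˢ Set.univ) by simp [Set.mk_preimage_prod],
      ← setIntegral_map (hB.prod .univ) hF.aestronglyMeasurable hid.aemeasurable_fst,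
      ← setIntegral_map (hB.prod .univ) hF.aestronglyMeasurable hid.aemeasurable_snd, hid.map_eq]
  refine (ae_eq_condExp_of_forall_setIntegral_eq hW'.comap_le hY' (fun _ _ _ => hgW'.integrableOn)
    ?_ (hg.comp (comap_measurable W')).aestronglyMeasurable).symm
  rintro _ ⟨B, hB, rfl⟩ _
  have hg_eq := hsetIntegral hB (hg.comp measurable_fst)
  have hY_eq := hsetIntegral hB measurable_snd
  dsimp only [Function.comp_apply] at hg_eq hY_eq
  change ∫ ω in _, g (W' ω) ∂ν = _
  rw [← hg_eq, ← hY_eq, ← setIntegral_condExp hW.comap_le hY ⟨B, hB, rfl⟩]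
  exact setIntegral_congr_ae (hW hB) (hYg.mono fun _ h _ => h.symm)

theorem ae_eq_comp_of_map_absolutelyContinuous {μ ν : Measure Ω} {W : Ω → 𝒲}
    (hW : Measurable W) (hμν : μ.map W ≪ ν.map W) {f g : 𝒲 → ℝ} (hf : Measurable f)
    (hg : Measurable g) (hfg : f ∘ W =ᵐ[ν] g ∘ W) : f ∘ W =ᵐ[μ] g ∘ W :=
  ae_of_ae_map hW.aemeasurable
    (hμν.ae_le ((ae_map_iff hW.aemeasurable (measurableSet_eq_fun hf hg)).mpr hfg))

end Transport

end ProbabilityTheory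

theorem pattc_second_term_identification_general
    {Ω 𝒲 : Type*} [MeasurableSpace Ω] [StandardBorelSpace Ω]
    [MeasurableSpace 𝒲]
    (P : Measure Ω) [IsProbabilityMeasure P]
    (S T C D : Ω → Bool) (hS : Measurable S) (hT : Measurable T)
    (hC : Measurable C)
    (W : Ω → 𝒲) (hW : Measurable W)
    (Y : Bool → Bool → Ω → ℝ)
    (hYmeas : ∀ s d, Measurable (Y s d)) (hYint : ∀ s d, Integrable (Y s d) P)
    -- (A1) consistency under parallel studies
    (hA1 : ∀ d, Y false d =ᵐ[P] Y true d)
    -- (A4) strong ignorability of sample assignment for controls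
    (hA4 : CondIndepFun (MeasurableSpace.comap W inferInstance) hW.comap_le (Y true false) S
      (P[|{ω | T ω = true ∧ C ω = true}]))
    (hA4pos : ∀ᵐ ω ∂(P[|{ω | T ω = true ∧ C ω = true}]),
      0 < ((P[|{ω | T ω = true ∧ C ω = true}])[({ω | S ω = true}).indicator
            (fun _ => (1 : ℝ)) | MeasurableSpace.comap W inferInstance]) ω ∧
      ((P[|{ω | T ω = true ∧ C ω = true}])[({ω | S ω = true}).indicator
            (fun _ => (1 : ℝ)) | MeasurableSpace.comap W inferInstance]) ω < 1)
    -- (A6) one-sided noncompliance: {D=1} = {T=1} ∩ {C=1} up to null sets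
    (hA6 : ({ω | D ω = true} : Set Ω) =ᵐ[P] ({ω | T ω = true} ∩ {ω | C ω = true} : Set Ω))
    -- (R) randomization in the RCT
    (hR : IndepFun T (fun ω => (W ω, C ω, (Y true false ω, Y true true ω)))
      (P[|{ω | S ω = true}]))
    -- positivity of the conditioning events
    (hpos0 : 0 < P {ω | S ω = false ∧ D ω = true})
    (hpos2 : 0 < P {ω | S ω = true ∧ T ω = false ∧ C ω = true})
    -- absolute continuity of the covariate laws
    (hac0 : (P[|{ω | S ω = false ∧ D ω = true}]).map W ≪
      (P[|{ω | S ω = true ∧ T ω = false ∧ C ω = true}]).map W)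
    -- g₀ : version of E[Y₁₀ | S=1, T=0, C=1, W]
    (g₀ : 𝒲 → ℝ) (hg₀m : Measurable g₀)
    (hg₀ : (fun ω => g₀ (W ω)) =ᵐ[P[|{ω | S ω = true ∧ T ω = false ∧ C ω = true}]]
      (P[|{ω | S ω = true ∧ T ω = false ∧ C ω = true}])[Y true false |
        MeasurableSpace.comap W inferInstance]) :
    ∫ ω, Y false false ω ∂(P[|{ω | S ω = false ∧ D ω = true}]) =
      ∫ ω, g₀ (W ω) ∂(P[|{ω | S ω = false ∧ D ω = true}]) := by
  set Q := P[|{ω | T ω = true ∧ C ω = true}] with hQ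
  have hmeas {X : Ω → Bool} (hX : Measurable X) (b : Bool) : MeasurableSet {ω | X ω = b} :=
    hX (measurableSet_singleton b)
  have hTC : MeasurableSet {ω | T ω = true ∧ C ω = true} := (hmeas hT true).inter (hmeas hC true)
  have hPTC : P {ω | T ω = true ∧ C ω = true} ≠ 0 := fun h0 => hpos0.ne'
    (measure_mono_null (fun _ hω => hω.2) ((measure_congr hA6).trans h0))
  have : IsProbabilityMeasure Q := cond_isProbabilityMeasure hPTC
  have hQ₀ : P[|{ω | S ω = false ∧ D ω = true}] = Q[|{ω | S ω = false}] := by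
    rw [hQ, cond_cond_eq_cond_inter hTC (hmeas hS false), Set.inter_comm]
    exact cond_congr_ae (ae_eq_set_inter (ae_eq_refl {ω | S ω = false}) hA6)
  have hQ₁ : Q[|{ω | S ω = true}] = P[|{ω | S ω = true ∧ T ω = true ∧ C ω = true}] := by
    rw [hQ, cond_cond_eq_cond_inter hTC (hmeas hS true)]
    exact congrArg _ (Set.ext fun _ => and_comm)
  have hpos1 : P {ω | S ω = true ∧ T ω = true ∧ C ω = true} ≠ 0 := by
    rw [← Set.ext fun _ => and_comm]
    exact (inter_pos_of_cond_ne_zero hTC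
      (measure_ne_zero_of_ae_pos_condExp_indicator (hA4pos.mono fun _ h => h.1))).ne'
  -- `{S=1, T=t, C=1}` is `{S=1} ∩ (T ⁻¹' {t} ∩ V ⁻¹' {v | v.2.1 = true})` by definition,
  -- for `V` the vector in (R).
  have hRCT : IdentDistrib (fun ω => (W ω, Y true false ω)) (fun ω => (W ω, Y true false ω))
      P[|{ω | S ω = true ∧ T ω = false ∧ C ω = true}]
      P[|{ω | S ω = true ∧ T ω = true ∧ C ω = true}] :=
    (hR.identDistrib_cond_inter_preimage (hmeas hS true) hT (by fun_prop)
      (measurableSet_singleton false) (measurableSet_singleton true)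
      (measurable_fst.comp measurable_snd (measurableSet_singleton true)) hpos2.ne' hpos1).comp
      (by fun_prop : Measurable fun v : 𝒲 × Bool × ℝ × ℝ => (v.1, v.2.2.1))
  obtain ⟨h, hh, hfac⟩ := (stronglyMeasurable_condExp (μ := Q) (f := Y true false)
    (m := MeasurableSpace.comap W inferInstance)).exists_eq_measurable_comp
  have hS_cond (b : Bool) := hA4.condExp_cond_preimage_ae_eq (hYmeas true false)
    ((hYint true false).cond _) hW hS (measurableSet_singleton b)
  have hhg : h ∘ W =ᵐ[P[|{ω | S ω = false ∧ D ω = true}]] g₀ ∘ W := by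
    refine ae_eq_comp_of_map_absolutelyContinuous hW ((hRCT.comp measurable_fst).map_eq ▸ hac0)
      hh.measurable hg₀m (EventuallyEq.trans ?_ (hRCT.condExp_ae_eq_comp hW hW
        ((hYint true false).cond _) hg₀m hg₀.symm))
    rw [← hQ₁, ← hfac]
    exact (hS_cond true).symm
  calc ∫ ω, Y false false ω ∂(P[|{ω | S ω = false ∧ D ω = true}])
      = ∫ ω, Y true false ω ∂(P[|{ω | S ω = false ∧ D ω = true}]) :=
        integral_congr_ae ((hA1 false).filter_mono cond_absolutelyContinuous.ae_le)
    _ = ∫ ω, h (W ω) ∂(P[|{ω | S ω = false ∧ D ω = true}]) := by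
        rw [hQ₀, ← integral_condExp hW.comap_le, ← Function.comp_def h W, ← hfac]
        exact integral_congr_ae (hS_cond false)
    _ = ∫ ω, g₀ (W ω) ∂(P[|{ω | S ω = false ∧ D ω = true}]) := integral_congr_ae hhg

/-- Under consistency (A1), conditional independence of compliance and sample/treatment
assignment (A2), strong ignorability of sample assignment for controls (A4), one-sided
noncompliance (A6) and RCT randomization (R), the mean control potential outcome of treated
population members is identified from the RCT controls who would have complied had they been
assigned to treatment: `E[Y₀₀ | S=0, D=1] = E[g₀(W) | S=0, D=1]` where `g₀` is a version of
`E[Y₁₀ | S=1, T=0, C=1, W]`. -/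
theorem pattc_second_term_identification
    {Ω 𝒲 : Type*} [MeasurableSpace Ω] [StandardBorelSpace Ω]
    [MeasurableSpace 𝒲] [StandardBorelSpace 𝒲]
    (P : Measure Ω) [IsProbabilityMeasure P]
    (S T C D : Ω → Bool) (hS : Measurable S) (hT : Measurable T)
    (hC : Measurable C) (hD : Measurable D)
    (W : Ω → 𝒲) (hW : Measurable W)
    (Y : Bool → Bool → Ω → ℝ)
    (hYmeas : ∀ s d, Measurable (Y s d)) (hYint : ∀ s d, Integrable (Y s d) P)
    -- (A1) consistency under parallel studies
    (hA1 : ∀ d, Y false d =ᵐ[P] Y true d)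
    -- (A2) conditional independence of compliance and sample/treatment assignment given W
    (hA2 : CondIndepFun (MeasurableSpace.comap W inferInstance) hW.comap_le C
      (fun ω => (S ω, T ω)) P)
    -- (A4) strong ignorability of sample assignment for controls
    (hA4 : CondIndepFun (MeasurableSpace.comap W inferInstance) hW.comap_le (Y true false) S
      (P[|{ω | T ω = true ∧ C ω = true}]))
    (hA4pos : ∀ᵐ ω ∂(P[|{ω | T ω = true ∧ C ω = true}]),
      0 < ((P[|{ω | T ω = true ∧ C ω = true}])[({ω | S ω = true}).indicator
            (fun _ => (1 : ℝ)) | MeasurableSpace.comap W inferInstance]) ω ∧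
      ((P[|{ω | T ω = true ∧ C ω = true}])[({ω | S ω = true}).indicator
            (fun _ => (1 : ℝ)) | MeasurableSpace.comap W inferInstance]) ω < 1)
    -- (A6) one-sided noncompliance: {D=1} = {T=1} ∩ {C=1} up to null sets
    (hA6 : ({ω | D ω = true} : Set Ω) =ᵐ[P] ({ω | T ω = true} ∩ {ω | C ω = true} : Set Ω))
    -- (R) randomization in the RCT
    (hR : IndepFun T (fun ω => (W ω, C ω, (Y true false ω, Y true true ω)))
      (P[|{ω | S ω = true}]))
    -- positivity of the conditioning events
    (hpos0 : 0 < P {ω | S ω = false ∧ D ω = true})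
    (hpos2 : 0 < P {ω | S ω = true ∧ T ω = false ∧ C ω = true})
    -- absolute continuity of the covariate laws
    (hac0 : (P[|{ω | S ω = false ∧ D ω = true}]).map W ≪
      (P[|{ω | S ω = true ∧ T ω = false ∧ C ω = true}]).map W)
    -- g₀ : version of E[Y₁₀ | S=1, T=0, C=1, W]
    (g₀ : 𝒲 → ℝ) (hg₀m : Measurable g₀)
    (hg₀ : (fun ω => g₀ (W ω)) =ᵐ[P[|{ω | S ω = true ∧ T ω = false ∧ C ω = true}]]
      (P[|{ω | S ω = true ∧ T ω = false ∧ C ω = true}])[Y true false |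
        MeasurableSpace.comap W inferInstance]) :
    ∫ ω, Y false false ω ∂(P[|{ω | S ω = false ∧ D ω = true}]) =
      ∫ ω, g₀ (W ω) ∂(P[|{ω | S ω = false ∧ D ω = true}]) :=
  pattc_second_term_identification_general P S T C D hS hT hC W hW Y hYmeas hYint hA1 hA4 hA4pos hA6
    hR hpos0 hpos2 hac0 g₀ hg₀m hg₀
end

section
/- Let Y : Ω → ℝ be integrable and suppose that under ν := P(·|{S=1}), T is independent of the triple (W, C, Y), with P(S=1, T=1, C=1) > 0 and P(S=1, T=0, C=1) > 0. Then under the conditional measure ν(·|{C=1}) = P(·|{S=1, C=1}), the conditional expectation of Y given the σ-algebra generated by W and T equals the conditional expectation of Y given σ(W), almost surely. Consequently, any version of E[Y | {S=1, T=1, C=1}, W] and any version of E[Y | {S=1, T=0, C=1}, W] agree almost everywhere with respect to the law of W under P(·|{S=1, C=1}): randomized assignment allows the treatment-arm conditioning T=1 to be replaced by T=0 for compliers. -/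
/-!
Under `μ := P[|S=1, C=1]` the assignment `T` stays independent of `(W, Y)`, because `{C = 1}` is
an event of the triple `(W, C, Y)` that `T` is independent of under `P[|S=1]`. Hence on a
rectangle `W⁻¹A ∩ T⁻¹B` both `Y` and `E[Y | W]` integrate to `μ(T⁻¹B)` times their integral over
`W⁻¹A`, and a π-λ argument gives `E[Y | W, T] = E[Y | W]`. The same independence shows that
conditioning `μ` on either arm `{T = b}` leaves the joint law of `(W, Y)` unchanged; a version of
`E[Y | W]` is determined a.e. by that joint law, so the versions of both arms agree.
-/

open MeasureTheory ProbabilityTheory Set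

lemma IsPiSystem.image2_inter {α : Type*} {C D : Set (Set α)} (hC : IsPiSystem C)
    (hD : IsPiSystem D) : IsPiSystem (image2 (· ∩ ·) C D) := by
  rintro _ ⟨s₁, hs₁, t₁, ht₁, rfl⟩ _ ⟨s₂, hs₂, t₂, ht₂, rfl⟩ hst
  rw [inter_inter_inter_comm] at hst ⊢
  exact mem_image2_of_mem (hC _ hs₁ _ hs₂ (hst.mono inter_subset_left))
    (hD _ ht₁ _ ht₂ (hst.mono inter_subset_right))

lemma MeasurableSpace.sup_eq_generateFrom_image2_inter {α : Type*} (m₁ m₂ : MeasurableSpace α) :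
    m₁ ⊔ m₂ =
      generateFrom (image2 (· ∩ ·) {s | MeasurableSet[m₁] s} {t | MeasurableSet[m₂] t}) := by
  refine le_antisymm (sup_le (fun s hs => ?_) (fun t ht => ?_)) (generateFrom_le ?_)
  · exact measurableSet_generateFrom ⟨s, hs, univ, @MeasurableSet.univ _ m₂, inter_univ s⟩
  · exact measurableSet_generateFrom ⟨univ, @MeasurableSet.univ _ m₁, t, ht, univ_inter t⟩
  · rintro _ ⟨s, hs, t, ht, rfl⟩
    exact (le_sup_left (a := m₁) (b := m₂) s hs).inter (le_sup_right (a := m₁) (b := m₂) t ht)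

namespace MeasureTheory

variable {Ω E : Type*} {mΩ : MeasurableSpace Ω} {μ : Measure Ω} [NormedAddCommGroup E]

lemma setIntegral_eq_of_forall_inter [NormedSpace ℝ E] {m₁ m₂ : MeasurableSpace Ω}
    (hm₁ : m₁ ≤ mΩ) (hm₂ : m₂ ≤ mΩ) {f g : Ω → E} (hf : Integrable f μ) (hg : Integrable g μ)
    (h : ∀ s t, MeasurableSet[m₁] s → MeasurableSet[m₂] t →
      ∫ x in s ∩ t, f x ∂μ = ∫ x in s ∩ t, g x ∂μ)
    {u : Set Ω} (hu : MeasurableSet[m₁ ⊔ m₂] u) : ∫ x in u, f x ∂μ = ∫ x in u, g x ∂μ := by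
  have hm : m₁ ⊔ m₂ ≤ mΩ := sup_le hm₁ hm₂
  induction u, hu using MeasurableSpace.induction_on_inter
    (MeasurableSpace.sup_eq_generateFrom_image2_inter m₁ m₂)
    (IsPiSystem.image2_inter (@MeasurableSpace.isPiSystem_measurableSet Ω m₁)
      (@MeasurableSpace.isPiSystem_measurableSet Ω m₂)) with
  | empty => simp
  | basic _ hu =>
    obtain ⟨s, hs, t, ht, rfl⟩ := hu
    exact h s t hs ht
  | compl u hu ih =>
    have huniv := h univ univ MeasurableSet.univ MeasurableSet.univ
    rw [inter_univ, setIntegral_univ, setIntegral_univ] at huniv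
    rw [setIntegral_compl (hm u hu) hf, setIntegral_compl (hm u hu) hg, ih, huniv]
  | iUnion u hdisj hu ih =>
    rw [integral_iUnion (fun i => hm _ (hu i)) hdisj hf.integrableOn,
      integral_iUnion (fun i => hm _ (hu i)) hdisj hg.integrableOn]
    exact tsum_congr ih

lemma Integrable.cond_s7 {f : Ω → E} (hf : Integrable f μ) (s : Set Ω) : Integrable f (μ[|s]) := by
  by_cases hs : μ s = 0
  · simp [cond_eq_zero_of_meas_eq_zero hs]
  exact hf.restrict.smul_measure (ENNReal.inv_ne_top.2 hs)

end MeasureTheory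

namespace ProbabilityTheory

variable {Ω : Type*} {mΩ : MeasurableSpace Ω} {μ : Measure Ω}

lemma Indep.setIntegral_inter {m m' : MeasurableSpace Ω} (hm' : m' ≤ mΩ) (hind : Indep m m' μ)
    {f : Ω → ℝ} (hfm : StronglyMeasurable[m] f) (hf : AEStronglyMeasurable[mΩ] f μ)
    {s t : Set Ω} (hsm : MeasurableSet[m] s) (hs : MeasurableSet[mΩ] s)
    (ht : MeasurableSet[m'] t) :
    ∫ x in s ∩ t, f x ∂μ = μ.real t * ∫ x in s, f x ∂μ := by
  have ht1 : Measurable[m'] (t.indicator (1 : Ω → ℝ)) := measurable_const.indicator ht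
  have hind' : s.indicator f ⟂ᵢ[μ] t.indicator (1 : Ω → ℝ) := by
    rw [IndepFun_iff_Indep]
    exact indep_of_indep_of_le_left (indep_of_indep_of_le_right hind ht1.comap_le)
      (hfm.measurable.indicator hsm).comap_le
  calc ∫ x in s ∩ t, f x ∂μ = ∫ x, (s.indicator f * t.indicator 1 : Ω → ℝ) x ∂μ := by
        rw [← integral_indicator (hs.inter (hm' _ ht))]
        congr 1 with x
        simp [← inter_indicator_mul]
    _ = μ.real t * ∫ x in s, f x ∂μ := by
      rw [hind'.integral_mul_eq_mul_integral (hf.indicator hs)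
        (ht1.mono hm' le_rfl).aestronglyMeasurable, integral_indicator hs,
        integral_indicator_one (hm' _ ht), mul_comm]

/-- `m` need not be a sub-σ-algebra of `mΩ`, so that `Y` need only be a.e.-measurable. -/
theorem condExp_sup_ae_eq_of_indep {m₁ m₂ m : MeasurableSpace Ω} [IsFiniteMeasure μ]
    (hm₁ : m₁ ≤ mΩ) (hm₂ : m₂ ≤ mΩ) (hm₁m : m₁ ≤ m) (hind : Indep m m₂ μ) {Y : Ω → ℝ}
    (hYm : StronglyMeasurable[m] Y) : μ[Y | m₁ ⊔ m₂] =ᵐ[μ] μ[Y | m₁] := by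
  by_cases hY : Integrable Y μ
  swap
  · simp [condExp_of_not_integrable hY]
  have hrect : ∀ s t, MeasurableSet[m₁] s → MeasurableSet[m₂] t →
      ∫ x in s ∩ t, (μ[Y | m₁]) x ∂μ = ∫ x in s ∩ t, Y x ∂μ := fun s t hs ht => by
    rw [hind.setIntegral_inter hm₂ (stronglyMeasurable_condExp.mono hm₁m)
        integrable_condExp.aestronglyMeasurable (hm₁m _ hs) (hm₁ _ hs) ht,
      hind.setIntegral_inter hm₂ hYm hY.aestronglyMeasurable (hm₁m _ hs) (hm₁ _ hs) ht,
      setIntegral_condExp hm₁ hY hs]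
  exact (ae_eq_condExp_of_forall_setIntegral_eq (sup_le hm₁ hm₂) hY
    (fun _ _ _ => integrable_condExp.integrableOn)
    (fun _ hu _ => setIntegral_eq_of_forall_inter hm₁ hm₂ integrable_condExp hY hrect hu)
    (stronglyMeasurable_condExp.mono (le_sup_left : m₁ ≤ m₁ ⊔ m₂)).aestronglyMeasurable).symm

variable {β 𝒲 : Type*} [MeasurableSpace β] [MeasurableSpace 𝒲]

theorem IndepFun.condExp_comap_sup_ae_eq [IsFiniteMeasure μ] {T : Ω → β} {W : Ω → 𝒲}
    {Y : Ω → ℝ} (hind : T ⟂ᵢ[μ] fun ω => (W ω, Y ω)) (hT : Measurable T) (hW : Measurable W) :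
    μ[Y | MeasurableSpace.comap W inferInstance ⊔ MeasurableSpace.comap T inferInstance]
      =ᵐ[μ] μ[Y | MeasurableSpace.comap W inferInstance] :=
  condExp_sup_ae_eq_of_indep hW.comap_le hT.comap_le
    (measurable_fst.comp (comap_measurable fun ω => (W ω, Y ω))).comap_le
    ((IndepFun_iff_Indep _ _ _).1 hind).symm
    (measurable_snd.comp (comap_measurable _)).stronglyMeasurable

lemma Indep.cond_right {m₁ m₂ : MeasurableSpace Ω} [IsFiniteMeasure μ] (h : Indep m₁ m₂ μ)
    {E : Set Ω} (hE₂ : MeasurableSet[m₂] E) (hE : MeasurableSet[mΩ] E) :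
    Indep m₁ m₂ (μ[|E]) := by
  by_cases hμE : μ E = 0
  · simp [cond_eq_zero_of_meas_eq_zero hμE, Indep_iff]
  rw [Indep_iff] at h ⊢
  intro s t hs ht
  have hsE : μ (E ∩ s) = μ E * μ s := by rw [inter_comm, h s E hs hE₂, mul_comm]
  rw [cond_apply hE, cond_apply hE, cond_apply hE, inter_left_comm, h s _ hs (hE₂.inter ht), hsE,
    ← mul_assoc _ (μ E), ENNReal.inv_mul_cancel hμE (measure_ne_top _ _), one_mul, mul_left_comm]

lemma IndepFun.cond_preimage_right {γ : Type*} [mγ : MeasurableSpace γ] [IsFiniteMeasure μ]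
    {f : Ω → β} {g : Ω → γ} (h : f ⟂ᵢ[μ] g) {B : Set γ} (hB : MeasurableSet B)
    (hgB : MeasurableSet (g ⁻¹' B)) : f ⟂ᵢ[μ[|g ⁻¹' B]] g := by
  rw [IndepFun_iff_Indep] at h ⊢
  exact h.cond_right ⟨B, hB, rfl⟩ hgB

lemma IndepFun.cond_preimage_middle {γ δ : Type*} [MeasurableSpace γ] [MeasurableSpace δ]
    [IsFiniteMeasure μ] {f : Ω → β} {X : Ω → 𝒲} {Z : Ω → γ} {V : Ω → δ}
    (h : f ⟂ᵢ[μ] fun ω => (X ω, Z ω, V ω)) (hZ : Measurable Z) {B : Set γ}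
    (hB : MeasurableSet B) : f ⟂ᵢ[μ[|Z ⁻¹' B]] fun ω => (X ω, V ω) := by
  have hZB : Z ⁻¹' B = (fun ω => (X ω, Z ω, V ω)) ⁻¹' (univ ×ˢ B ×ˢ univ) := by
    ext; simp
  have h' := h.cond_preimage_right (MeasurableSet.univ.prod (hB.prod MeasurableSet.univ))
    (hZB ▸ hZ hB)
  rw [← hZB] at h'
  exact h'.comp measurable_id (measurable_fst.prodMk measurable_snd.snd)

lemma IndepFun.map_cond_preimage_left {γ : Type*} [MeasurableSpace γ] [IsFiniteMeasure μ]
    {f : Ω → β} {g : Ω → γ} (h : f ⟂ᵢ[μ] g) (hf : Measurable f) (hg : AEMeasurable g μ)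
    {B : Set β} (hB : MeasurableSet B) (hμB : μ (f ⁻¹' B) ≠ 0) :
    (μ[|f ⁻¹' B]).map g = μ.map g := by
  ext s hs
  rw [Measure.map_apply_of_aemeasurable (hg.mono_ac cond_absolutelyContinuous) hs,
    Measure.map_apply_of_aemeasurable hg hs, cond_apply (hf hB),
    h.measure_inter_preimage_eq_mul _ _ hB hs, ← mul_assoc,
    ENNReal.inv_mul_cancel hμB (measure_ne_top _ _), one_mul]

end ProbabilityTheory

namespace MeasureTheory

variable {Ω 𝒲 : Type*} {mΩ : MeasurableSpace Ω} [MeasurableSpace 𝒲] {W : Ω → 𝒲} {Y : Ω → ℝ}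

lemma integrable_map_of_comp_ae_eq_condExp {ρ : Measure Ω} {g : 𝒲 → ℝ} (hW : Measurable W)
    (hg : Measurable g)
    (hgY : (fun ω => g (W ω)) =ᵐ[ρ] ρ[Y | MeasurableSpace.comap W inferInstance]) :
    Integrable g (ρ.map W) :=
  (integrable_map_measure hg.aestronglyMeasurable hW.aemeasurable).2
    (integrable_condExp.congr hgY.symm)

lemma setIntegral_map_eq_of_comp_ae_eq_condExp {ρ : Measure Ω} [IsFiniteMeasure ρ]
    {g : 𝒲 → ℝ} (hW : Measurable W) (hY : Integrable Y ρ) (hg : Measurable g)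
    (hgY : (fun ω => g (W ω)) =ᵐ[ρ] ρ[Y | MeasurableSpace.comap W inferInstance])
    {A : Set 𝒲} (hA : MeasurableSet A) :
    ∫ w in A, g w ∂(ρ.map W) = ∫ p in Prod.fst ⁻¹' A, p.2 ∂(ρ.map fun ω => (W ω, Y ω)) :=
  calc ∫ w in A, g w ∂(ρ.map W) = ∫ ω in W ⁻¹' A, g (W ω) ∂ρ :=
        setIntegral_map hA hg.aestronglyMeasurable hW.aemeasurable
    _ = ∫ ω in W ⁻¹' A, (ρ[Y | MeasurableSpace.comap W inferInstance]) ω ∂ρ :=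
        integral_congr_ae (ae_restrict_of_ae hgY)
    _ = ∫ ω in W ⁻¹' A, Y ω ∂ρ := setIntegral_condExp hW.comap_le hY ⟨A, hA, rfl⟩
    _ = _ := (setIntegral_map (measurable_fst hA) measurable_snd.aestronglyMeasurable
        (hW.aemeasurable.prodMk hY.aemeasurable)).symm

theorem ae_eq_of_comp_ae_eq_condExp_of_map_eq {ρ₁ ρ₀ : Measure Ω} [IsFiniteMeasure ρ₁]
    [IsFiniteMeasure ρ₀] (hW : Measurable W) (hY₁ : Integrable Y ρ₁) (hY₀ : Integrable Y ρ₀)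
    (hlaw : ρ₁.map (fun ω => (W ω, Y ω)) = ρ₀.map (fun ω => (W ω, Y ω)))
    {g₁ g₀ : 𝒲 → ℝ} (hg₁ : Measurable g₁) (hg₀ : Measurable g₀)
    (h₁ : (fun ω => g₁ (W ω)) =ᵐ[ρ₁] ρ₁[Y | MeasurableSpace.comap W inferInstance])
    (h₀ : (fun ω => g₀ (W ω)) =ᵐ[ρ₀] ρ₀[Y | MeasurableSpace.comap W inferInstance]) :
    g₁ =ᵐ[ρ₁.map W] g₀ := by
  have hmap : ∀ ρ : Measure Ω, Integrable Y ρ →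
      (ρ.map fun ω => (W ω, Y ω)).map Prod.fst = ρ.map W := fun ρ hY =>
    AEMeasurable.map_map_of_aemeasurable measurable_fst.aemeasurable
      (hW.aemeasurable.prodMk hY.aemeasurable)
  have hmapW : ρ₁.map W = ρ₀.map W := by rw [← hmap ρ₁ hY₁, hlaw, hmap ρ₀ hY₀]
  refine Integrable.ae_eq_of_forall_setIntegral_eq g₁ g₀
    (integrable_map_of_comp_ae_eq_condExp hW hg₁ h₁)
    (hmapW ▸ integrable_map_of_comp_ae_eq_condExp hW hg₀ h₀) fun A hA _ => ?_
  rw [setIntegral_map_eq_of_comp_ae_eq_condExp hW hY₁ hg₁ h₁ hA, hmapW,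
    setIntegral_map_eq_of_comp_ae_eq_condExp hW hY₀ hg₀ h₀ hA, hlaw]

end MeasureTheory

namespace ProbabilityTheory

variable {Ω β 𝒲 : Type*} {mΩ : MeasurableSpace Ω} [MeasurableSpace β] [MeasurableSpace 𝒲]
  {μ : Measure Ω} {W : Ω → 𝒲} {Y : Ω → ℝ}

theorem IndepFun.ae_eq_map_of_comp_ae_eq_condExp_cond [IsFiniteMeasure μ] {T : Ω → β}
    (hind : T ⟂ᵢ[μ] fun ω => (W ω, Y ω)) (hT : Measurable T) (hW : Measurable W)
    (hY : Integrable Y μ) {B₁ B₀ : Set β} (hB₁ : MeasurableSet B₁) (hB₀ : MeasurableSet B₀)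
    (hμ₁ : μ (T ⁻¹' B₁) ≠ 0) (hμ₀ : μ (T ⁻¹' B₀) ≠ 0) {g₁ g₀ : 𝒲 → ℝ}
    (hg₁ : Measurable g₁) (hg₀ : Measurable g₀)
    (h₁ : (fun ω => g₁ (W ω)) =ᵐ[μ[|T ⁻¹' B₁]]
      (μ[|T ⁻¹' B₁])[Y | MeasurableSpace.comap W inferInstance])
    (h₀ : (fun ω => g₀ (W ω)) =ᵐ[μ[|T ⁻¹' B₀]]
      (μ[|T ⁻¹' B₀])[Y | MeasurableSpace.comap W inferInstance]) :
    g₁ =ᵐ[μ.map W] g₀ := by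
  have hWY : AEMeasurable (fun ω => (W ω, Y ω)) μ := hW.aemeasurable.prodMk hY.aemeasurable
  have hindW : T ⟂ᵢ[μ] W := hind.comp measurable_id measurable_fst
  rw [← hindW.map_cond_preimage_left hT hW.aemeasurable hB₁ hμ₁]
  exact ae_eq_of_comp_ae_eq_condExp_of_map_eq hW (hY.cond_s7 _) (hY.cond_s7 _)
    ((hind.map_cond_preimage_left hT hWY hB₁ hμ₁).trans
      (hind.map_cond_preimage_left hT hWY hB₀ hμ₀).symm) hg₁ hg₀ h₁ h₀

end ProbabilityTheory

theorem randomization_swaps_arms_general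
    {Ω 𝒲 : Type*} [MeasurableSpace Ω]
    [MeasurableSpace 𝒲]
    (P : Measure Ω) [IsProbabilityMeasure P]
    (S T C : Ω → Bool) (hS : Measurable S) (hT : Measurable T) (hC : Measurable C)
    (W : Ω → 𝒲) (hW : Measurable W)
    (Y : Ω → ℝ) (hYint : Integrable Y P)
    (hR : IndepFun T (fun ω => (W ω, C ω, Y ω)) (P[|{ω | S ω = true}]))
    (hpos1 : 0 < P {ω | S ω = true ∧ T ω = true ∧ C ω = true})
    (hpos0 : 0 < P {ω | S ω = true ∧ T ω = false ∧ C ω = true}) :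
    ((P[|{ω | S ω = true ∧ C ω = true}])[Y |
        MeasurableSpace.comap W inferInstance ⊔ MeasurableSpace.comap T inferInstance]
      =ᵐ[P[|{ω | S ω = true ∧ C ω = true}]]
      (P[|{ω | S ω = true ∧ C ω = true}])[Y | MeasurableSpace.comap W inferInstance]) ∧
    ∀ g₁ g₀ : 𝒲 → ℝ, Measurable g₁ → Measurable g₀ →
      ((fun ω => g₁ (W ω)) =ᵐ[P[|{ω | S ω = true ∧ T ω = true ∧ C ω = true}]]
        (P[|{ω | S ω = true ∧ T ω = true ∧ C ω = true}])[Y |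
          MeasurableSpace.comap W inferInstance]) →
      ((fun ω => g₀ (W ω)) =ᵐ[P[|{ω | S ω = true ∧ T ω = false ∧ C ω = true}]]
        (P[|{ω | S ω = true ∧ T ω = false ∧ C ω = true}])[Y |
          MeasurableSpace.comap W inferInstance]) →
      g₁ =ᵐ[(P[|{ω | S ω = true ∧ C ω = true}]).map W] g₀ := by
  have hS1 : MeasurableSet {ω | S ω = true} := hS (measurableSet_singleton true)
  have hSC : MeasurableSet {ω | S ω = true ∧ C ω = true} :=
    hS1.inter (hC (measurableSet_singleton true))
  set μ := P[|{ω | S ω = true ∧ C ω = true}]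
  have hind : T ⟂ᵢ[μ] fun ω => (W ω, Y ω) := by
    have h := hR.cond_preimage_middle hC (measurableSet_singleton true)
    rwa [cond_cond_eq_cond_inter hS1 (hC (measurableSet_singleton true))] at h
  have harm : ∀ b, P {ω | S ω = true ∧ T ω = b ∧ C ω = true} ≠ 0 →
      P[|{ω | S ω = true ∧ T ω = b ∧ C ω = true}] = μ[|T ⁻¹' {b}] ∧ μ (T ⁻¹' {b}) ≠ 0 := by
    intro b hb
    have hset : {ω | S ω = true ∧ C ω = true} ∩ T ⁻¹' {b} =
        {ω | S ω = true ∧ T ω = b ∧ C ω = true} := by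
      ext; simp; tauto
    refine ⟨by rw [cond_cond_eq_cond_inter hSC (hT (measurableSet_singleton b)), hset], ?_⟩
    exact (cond_pos_of_inter_ne_zero hSC (hset ▸ hb)).ne'
  refine ⟨hind.condExp_comap_sup_ae_eq hT hW, fun g₁ g₀ hg₁ hg₀ h₁ h₀ => ?_⟩
  obtain ⟨heq₁, hμ₁⟩ := harm true hpos1.ne'
  obtain ⟨heq₀, hμ₀⟩ := harm false hpos0.ne'
  rw [heq₁] at h₁
  rw [heq₀] at h₀
  exact hind.ae_eq_map_of_comp_ae_eq_condExp_cond hT hW (hYint.cond_s7 _)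
    (measurableSet_singleton true) (measurableSet_singleton false) hμ₁ hμ₀ hg₁ hg₀ h₁ h₀

/-- Randomized assignment lets the treatment-arm conditioning `T=1` be replaced by `T=0` for
compliers: if under `ν := P[·|S=1]` the assignment `T` is independent of `(W, C, Y)`, then
under `P[·|S=1, C=1]` we have `E[Y | σ(W) ⊔ σ(T)] = E[Y | σ(W)]` a.s., and any versions of
`E[Y | S=1, T=1, C=1, W]` and `E[Y | S=1, T=0, C=1, W]` agree a.e. with respect to the law of
`W` under `P[·|S=1, C=1]`. -/
theorem randomization_swaps_arms
    {Ω 𝒲 : Type*} [MeasurableSpace Ω] [StandardBorelSpace Ω]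
    [MeasurableSpace 𝒲] [StandardBorelSpace 𝒲]
    (P : Measure Ω) [IsProbabilityMeasure P]
    (S T C : Ω → Bool) (hS : Measurable S) (hT : Measurable T) (hC : Measurable C)
    (W : Ω → 𝒲) (hW : Measurable W)
    (Y : Ω → ℝ) (hYint : Integrable Y P)
    (hR : IndepFun T (fun ω => (W ω, C ω, Y ω)) (P[|{ω | S ω = true}]))
    (hpos1 : 0 < P {ω | S ω = true ∧ T ω = true ∧ C ω = true})
    (hpos0 : 0 < P {ω | S ω = true ∧ T ω = false ∧ C ω = true}) :
    ((P[|{ω | S ω = true ∧ C ω = true}])[Y |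
        MeasurableSpace.comap W inferInstance ⊔ MeasurableSpace.comap T inferInstance]
      =ᵐ[P[|{ω | S ω = true ∧ C ω = true}]]
      (P[|{ω | S ω = true ∧ C ω = true}])[Y | MeasurableSpace.comap W inferInstance]) ∧
    ∀ g₁ g₀ : 𝒲 → ℝ, Measurable g₁ → Measurable g₀ →
      ((fun ω => g₁ (W ω)) =ᵐ[P[|{ω | S ω = true ∧ T ω = true ∧ C ω = true}]]
        (P[|{ω | S ω = true ∧ T ω = true ∧ C ω = true}])[Y |
          MeasurableSpace.comap W inferInstance]) →
      ((fun ω => g₀ (W ω)) =ᵐ[P[|{ω | S ω = true ∧ T ω = false ∧ C ω = true}]]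
        (P[|{ω | S ω = true ∧ T ω = false ∧ C ω = true}])[Y |
          MeasurableSpace.comap W inferInstance]) →
      g₁ =ᵐ[(P[|{ω | S ω = true ∧ C ω = true}]).map W] g₀ :=
  randomization_swaps_arms_general P S T C hS hT hC W hW Y hYint hR hpos1 hpos0
end
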